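/- For a fixed coordinate flag F_• in C^n as the initial chain, and a subword P of a word Q, there exists exactly one P-growth of F_• in which every vector space appearing in the diagram is a coordinate subspace (a span of standard basis vectors). -/
import Mathlib


/-- Coordinate subspaces of `ℂⁿ` are modeled by the subsets of standard basis vectors
spanning them, i.e. by `Finset (Fin n)`.  `border F Q V k` is the right border of the
configuration diagram after the first `k` growth steps: it starts as the initial chain `F`
(indexed by dimension), and the step for the `k`-th letter `j = Q k` replaces the border
space of dimension `j` by the new space `V k`. -/
def border {n N : ℕ} (F : ℕ → Finset (Fin n)) (Q : Fin N → ℕ)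
    (V : Fin N → Finset (Fin n)) : ℕ → ℕ → Finset (Fin n)
  | 0 => F
  | (k + 1) => fun d =>
      if h : k < N then
        (if d = Q ⟨k, h⟩ then V ⟨k, h⟩ else border F Q V k d)
      else border F Q V k d

/-- `V` is a `P`-growth of the initial coordinate flag `F` for the subword of `Q` given by
`b : Fin N → Bool` (`b k = true` meaning the `k`-th letter is retained): at each step the
new space `V k` has dimension `Q k` and sits between the border spaces of dimensions
`Q k - 1` and `Q k + 1`; for a retained letter `V k` equals the border space of the same
dimension it replaces, and for an omitted letter it differs from it. -/
def IsCoordGrowth {n N : ℕ} (F : ℕ → Finset (Fin n)) (Q : Fin N → ℕ)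
    (b : Fin N → Bool) (V : Fin N → Finset (Fin n)) : Prop :=
  ∀ k : Fin N,
    border F Q V (k : ℕ) (Q k - 1) ⊆ V k ∧
    V k ⊆ border F Q V (k : ℕ) (Q k + 1) ∧
    (V k).card = Q k ∧
    (b k = true → V k = border F Q V (k : ℕ) (Q k)) ∧
    (b k = false → V k ≠ border F Q V (k : ℕ) (Q k))

set_option linter.unusedVariables false

lemma border_congr {n N : ℕ} (F : ℕ → Finset (Fin n)) (Q : Fin N → ℕ)
    {V W : Fin N → Finset (Fin n)} :
    ∀ k : ℕ, (∀ j : Fin N, (j : ℕ) < k → V j = W j) →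
      border F Q V k = border F Q W k := by
  intro k
  induction k with
  | zero => intro _; rfl
  | succ k ih =>
    intro h
    funext d
    simp only [border]
    have hk' := ih (fun j hj => h j (Nat.lt_succ_of_lt hj))
    split
    · rename_i hk
      rw [hk', h ⟨k, hk⟩ (Nat.lt_succ_self k)]
    · rw [hk']

lemma border_inv {n N : ℕ} (F : ℕ → Finset (Fin n))
    (hFcard : ∀ d, d ≤ n → (F d).card = d) (hFchain : ∀ d, F d ⊆ F (d + 1))
    (Q : Fin N → ℕ) (V : Fin N → Finset (Fin n)) (k : ℕ)
    (hg : ∀ j : Fin N, (j : ℕ) < k →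
      border F Q V (j : ℕ) (Q j - 1) ⊆ V j ∧
      V j ⊆ border F Q V (j : ℕ) (Q j + 1) ∧ (V j).card = Q j) :
    (∀ d, d ≤ n → (border F Q V k d).card = d) ∧
    (∀ d, border F Q V k d ⊆ border F Q V k (d + 1)) := by
  induction k with
  | zero => exact ⟨hFcard, hFchain⟩
  | succ k ih =>
    have ih' := ih (fun j hj => hg j (Nat.lt_succ_of_lt hj))
    by_cases hk : k < N
    · have hgk := hg ⟨k, hk⟩ (Nat.lt_succ_self k)
      simp only [border, dif_pos hk]
      constructor
      · intro d hd
        by_cases hdq : d = Q ⟨k, hk⟩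
        · rw [if_pos hdq, hgk.2.2, hdq]
        · rw [if_neg hdq]; exact ih'.1 d hd
      · intro d
        by_cases hdq : d = Q ⟨k, hk⟩
        · have : ¬ (d + 1 = Q ⟨k, hk⟩) := by omega
          rw [if_pos hdq, if_neg this, hdq]
          exact hgk.2.1
        · by_cases hdq1 : d + 1 = Q ⟨k, hk⟩
          · rw [if_neg hdq, if_pos hdq1]
            have hd : d = Q ⟨k, hk⟩ - 1 := by omega
            rw [hd]; exact hgk.1
          · rw [if_neg hdq, if_neg hdq1]; exact ih'.2 d
    · simp only [border, dif_neg hk]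
      exact ih'

lemma interval_unique {α : Type*} [DecidableEq α] {A B S T C : Finset α}
    (hAS : A ⊆ S) (hSB : S ⊆ B) (hAT : A ⊆ T) (hTB : T ⊆ B)
    (hAC : A ⊆ C) (hCB : C ⊆ B)
    (hB : B.card = A.card + 2) (hS : S.card = A.card + 1)
    (hT : T.card = A.card + 1) (hC : C.card = A.card + 1)
    (hSC : S ≠ C) (hTC : T ≠ C) : S = T := by
  have cS : (S \ A).card = 1 := by rw [Finset.card_sdiff_of_subset hAS, hS]; omega
  have cT : (T \ A).card = 1 := by rw [Finset.card_sdiff_of_subset hAT, hT]; omega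
  have cC : (C \ A).card = 1 := by rw [Finset.card_sdiff_of_subset hAC, hC]; omega
  have cB : (B \ A).card = 2 := by rw [Finset.card_sdiff_of_subset (hAS.trans hSB), hB]; omega
  obtain ⟨s, hs⟩ := Finset.card_eq_one.mp cS
  obtain ⟨t, ht⟩ := Finset.card_eq_one.mp cT
  obtain ⟨c, hc⟩ := Finset.card_eq_one.mp cC
  have eqS : S = A ∪ {s} := by rw [← hs, Finset.union_sdiff_of_subset hAS]
  have eqT : T = A ∪ {t} := by rw [← ht, Finset.union_sdiff_of_subset hAT]
  have eqC : C = A ∪ {c} := by rw [← hc, Finset.union_sdiff_of_subset hAC]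
  have hsc : s ≠ c := by intro h; apply hSC; rw [eqS, eqC, h]
  have htc : t ≠ c := by intro h; apply hTC; rw [eqT, eqC, h]
  have hsB : s ∈ B \ A :=
    Finset.sdiff_subset_sdiff hSB (le_refl _) (hs ▸ Finset.mem_singleton_self s)
  have htB : t ∈ B \ A :=
    Finset.sdiff_subset_sdiff hTB (le_refl _) (ht ▸ Finset.mem_singleton_self t)
  have hcB : c ∈ B \ A :=
    Finset.sdiff_subset_sdiff hCB (le_refl _) (hc ▸ Finset.mem_singleton_self c)
  have hst : s = t := by
    by_contra hst
    have hsub : ({s, t, c} : Finset α) ⊆ B \ A := by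
      intro x hx
      simp only [Finset.mem_insert, Finset.mem_singleton] at hx
      rcases hx with rfl | rfl | rfl <;> assumption
    have h3 : ({s, t, c} : Finset α).card = 3 := by
      rw [Finset.card_insert_of_notMem (by simp [hst, hsc]),
        Finset.card_insert_of_notMem (by simp [htc]), Finset.card_singleton]
    have := Finset.card_le_card hsub
    omega
  rw [eqS, eqT, hst]

noncomputable def buildV {n N : ℕ} (F : ℕ → Finset (Fin n)) (Q : Fin N → ℕ)
    (b : Fin N → Bool) : ℕ → Finset (Fin n)
  | k =>
    if h : k < N then
      if b ⟨k, h⟩ = true then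
        border F Q (fun j => if hj : (j : ℕ) < k then buildV F Q b j else ∅) k (Q ⟨k, h⟩)
      else
        border F Q (fun j => if hj : (j : ℕ) < k then buildV F Q b j else ∅) k (Q ⟨k, h⟩ - 1) ∪
          (border F Q (fun j => if hj : (j : ℕ) < k then buildV F Q b j else ∅) k (Q ⟨k, h⟩ + 1) \
            border F Q (fun j => if hj : (j : ℕ) < k then buildV F Q b j else ∅) k (Q ⟨k, h⟩))
    else ∅
termination_by k => k
decreasing_by all_goals exact hj

/-- For a fixed coordinate flag `F` as initial chain and a subword `b` of a word `Q` with
letters in `{1,…,n−1}`, there is exactly one `P`-growth of `F` all of whose vector spaces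
are coordinate subspaces. -/
theorem existsUnique_coordinate_growth {n N : ℕ} (F : ℕ → Finset (Fin n))
    (hFcard : ∀ d, d ≤ n → (F d).card = d) (hFchain : ∀ d, F d ⊆ F (d + 1))
    (Q : Fin N → ℕ) (hQ : ∀ k, 1 ≤ Q k ∧ Q k ≤ n - 1) (b : Fin N → Bool) :
    ∃! V : Fin N → Finset (Fin n), IsCoordGrowth F Q b V := by
  -- uniqueness of growths
  have uniq : ∀ V W : Fin N → Finset (Fin n),
      IsCoordGrowth F Q b V → IsCoordGrowth F Q b W → V = W := by
    intro V W hV hW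
    funext k
    suffices h : ∀ m : ℕ, ∀ k : Fin N, (k : ℕ) = m → V k = W k from h k k rfl
    intro m
    induction m using Nat.strong_induction_on with
    | _ m ih =>
      intro k hkm
      subst hkm
      have hprev : ∀ j : Fin N, (j : ℕ) < (k : ℕ) → V j = W j :=
        fun j hj => ih j hj j rfl
      have hbw : border F Q W (k : ℕ) = border F Q V (k : ℕ) :=
        border_congr F Q (k : ℕ) (fun j hj => (hprev j hj).symm)
      have inv := border_inv F hFcard hFchain Q V (k : ℕ)
        (fun j hj => ⟨(hV j).1, (hV j).2.1, (hV j).2.2.1⟩)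
      have hq1 := (hQ k).1
      have hq2 := (hQ k).2
      have cardA : (border F Q V (k : ℕ) (Q k - 1)).card = Q k - 1 := inv.1 _ (by omega)
      have cardB : (border F Q V (k : ℕ) (Q k + 1)).card = Q k + 1 := inv.1 _ (by omega)
      have cardC : (border F Q V (k : ℕ) (Q k)).card = Q k := inv.1 _ (by omega)
      have hAC : border F Q V (k : ℕ) (Q k - 1) ⊆ border F Q V (k : ℕ) (Q k) := by
        have h := inv.2 (Q k - 1)
        rwa [Nat.sub_add_cancel hq1] at h
      have hCB : border F Q V (k : ℕ) (Q k) ⊆ border F Q V (k : ℕ) (Q k + 1) := inv.2 (Q k)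
      obtain ⟨hV1, hV2, hV3, hV4, hV5⟩ := hV k
      obtain ⟨hW1, hW2, hW3, hW4, hW5⟩ := hW k
      rw [hbw] at hW1 hW2 hW4 hW5
      cases hb : b k with
      | true => rw [hV4 hb, hW4 hb]
      | false =>
        exact interval_unique hV1 hV2 hW1 hW2 hAC hCB
          (by rw [cardB, cardA]; omega) (by rw [hV3, cardA]; omega)
          (by rw [hW3, cardA]; omega) (by rw [cardC, cardA]; omega)
          (hV5 hb) (hW5 hb)
  -- existence
  set Vc : Fin N → Finset (Fin n) := fun k => buildV F Q b (k : ℕ) with hVc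
  have key : ∀ m : ℕ, ∀ k : Fin N, (k : ℕ) = m →
      (border F Q Vc (k : ℕ) (Q k - 1) ⊆ Vc k ∧
       Vc k ⊆ border F Q Vc (k : ℕ) (Q k + 1) ∧
       (Vc k).card = Q k ∧
       (b k = true → Vc k = border F Q Vc (k : ℕ) (Q k)) ∧
       (b k = false → Vc k ≠ border F Q Vc (k : ℕ) (Q k))) := by
    intro m
    induction m using Nat.strong_induction_on with
    | _ m ih =>
      intro k hkm
      subst hkm
      have hprev : ∀ j : Fin N, (j : ℕ) < (k : ℕ) →
          border F Q Vc (j : ℕ) (Q j - 1) ⊆ Vc j ∧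
          Vc j ⊆ border F Q Vc (j : ℕ) (Q j + 1) ∧ (Vc j).card = Q j :=
        fun j hj => ⟨(ih j hj j rfl).1, (ih j hj j rfl).2.1, (ih j hj j rfl).2.2.1⟩
      have inv := border_inv F hFcard hFchain Q Vc (k : ℕ) hprev
      have hq1 := (hQ k).1
      have hq2 := (hQ k).2
      have cardA : (border F Q Vc (k : ℕ) (Q k - 1)).card = Q k - 1 := inv.1 _ (by omega)
      have cardB : (border F Q Vc (k : ℕ) (Q k + 1)).card = Q k + 1 := inv.1 _ (by omega)
      have cardC : (border F Q Vc (k : ℕ) (Q k)).card = Q k := inv.1 _ (by omega)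
      have hAC : border F Q Vc (k : ℕ) (Q k - 1) ⊆ border F Q Vc (k : ℕ) (Q k) := by
        have h := inv.2 (Q k - 1)
        rwa [Nat.sub_add_cancel hq1] at h
      have hCB : border F Q Vc (k : ℕ) (Q k) ⊆ border F Q Vc (k : ℕ) (Q k + 1) := inv.2 (Q k)
      have hkN : (k : ℕ) < N := k.isLt
      have hVfeq : border F Q (fun j => if hj : (j : ℕ) < (k : ℕ) then buildV F Q b (j : ℕ) else ∅)
          (k : ℕ) = border F Q Vc (k : ℕ) :=
        border_congr F Q (k : ℕ) (fun j hj => by simp only [hVc]; rw [dif_pos hj])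
      have hunf : Vc k =
          if b k = true then border F Q Vc (k : ℕ) (Q k)
          else border F Q Vc (k : ℕ) (Q k - 1) ∪
            (border F Q Vc (k : ℕ) (Q k + 1) \ border F Q Vc (k : ℕ) (Q k)) := by
        show buildV F Q b (k : ℕ) = _
        rw [buildV, dif_pos hkN]
        simp only [Fin.eta, hVfeq]
      cases hb : b k with
      | true =>
        rw [hb, if_pos rfl] at hunf
        refine ⟨hunf ▸ hAC, hunf ▸ hCB, by rw [hunf, cardC], fun _ => hunf, fun h => by simp [hb] at h⟩
      | false =>
        rw [hb] at hunf
        simp only [Bool.false_eq_true, if_false] at hunf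
        have hBCcard : (border F Q Vc (k : ℕ) (Q k + 1) \ border F Q Vc (k : ℕ) (Q k)).card = 1 := by
          rw [Finset.card_sdiff_of_subset hCB, cardB, cardC]; omega
        obtain ⟨y, hy⟩ := Finset.card_eq_one.mp hBCcard
        have hyB : y ∈ border F Q Vc (k : ℕ) (Q k + 1) \ border F Q Vc (k : ℕ) (Q k) :=
          hy ▸ Finset.mem_singleton_self y
        have hyB' := Finset.mem_sdiff.mp hyB
        have hdisj : Disjoint (border F Q Vc (k : ℕ) (Q k - 1))
            (border F Q Vc (k : ℕ) (Q k + 1) \ border F Q Vc (k : ℕ) (Q k)) :=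
          Finset.disjoint_left.mpr fun x hxA hx => (Finset.mem_sdiff.mp hx).2 (hAC hxA)
        refine ⟨hunf ▸ Finset.subset_union_left, ?_, ?_, fun h => by simp [hb] at h, ?_⟩
        · rw [hunf]
          exact Finset.union_subset (hAC.trans hCB) (Finset.sdiff_subset)
        · rw [hunf, Finset.card_union_of_disjoint hdisj, cardA, hBCcard]; omega
        · intro _ heq
          have hyV : y ∈ Vc k := by
            rw [hunf]
            exact Finset.mem_union_right _ hyB
          rw [heq] at hyV
          exact hyB'.2 hyV
  have hgrow : IsCoordGrowth F Q b Vc := fun k => key k k rfl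
  exact ⟨Vc, hgrow, fun W hW => uniq W Vc hW hgrow⟩
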